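/- For every real parameter a > -1 and every x ∈ ℝ, the recurrence 2·F_{a+2}(x) + 2x·F_{a+1}(x) = (a+1)·F_a(x) holds; consequently F_a satisfies the Hermite differential equation F_a''(x) - 2x·F_a'(x) - 2(a+1)·F_a(x) = 0 for all x ∈ ℝ. -/

import Mathlib

/-!
Differentiating under the integral sign gives `F_a' = -2 F_{a+1}`, hence `F_a'' = 4 F_{a+2}`.
Integrating the derivative of `t ↦ exp(-t² - 2xt) t^(a+1)` over `(0, ∞)` gives the recurrence:
the boundary terms vanish at `0` because `a + 1 > 0`, and at `∞` because both this function and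
its derivative are integrable. The Hermite equation is twice the recurrence after these
substitutions.
-/

open MeasureTheory Real

/-- `Fa a x = ∫₀^∞ exp(-t² - 2xt) · t^a dt`, a Hermite-type function of negative degree. -/
noncomputable def Fa (a x : ℝ) : ℝ :=
  ∫ t in Set.Ioi (0 : ℝ), Real.exp (-(t ^ 2) - 2 * x * t) * t ^ a

open Set Filter

theorem exp_neg_sq_sub_mul_le (x t : ℝ) :
    exp (-(t ^ 2) - 2 * x * t) ≤ exp (2 * x ^ 2) * exp (-(1 / 2) * t ^ 2) := by
  rw [← exp_add, exp_le_exp]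
  nlinarith [sq_nonneg (t + 2 * x)]

theorem integrableOn_Fa_integrand {a : ℝ} (ha : -1 < a) (x : ℝ) :
    IntegrableOn (fun t : ℝ => exp (-(t ^ 2) - 2 * x * t) * t ^ a) (Ioi 0) := by
  have hgauss : IntegrableOn (fun t : ℝ => exp (2 * x ^ 2) * (t ^ a * exp (-(1 / 2) * t ^ 2)))
      (Ioi 0) := (integrableOn_rpow_mul_exp_neg_mul_sq (by norm_num) ha).const_mul _
  have hcont : ContinuousOn (fun t : ℝ => exp (-(t ^ 2) - 2 * x * t) * t ^ a) (Ioi 0) :=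
    ContinuousOn.mul (by fun_prop) (continuousOn_id.rpow_const fun t ht => Or.inl (ne_of_gt ht))
  refine hgauss.mono' (hcont.aestronglyMeasurable measurableSet_Ioi) ?_
  filter_upwards [self_mem_ae_restrict measurableSet_Ioi] with t (ht : 0 < t)
  have hpow : 0 ≤ t ^ a := rpow_nonneg ht.le a
  rw [norm_of_nonneg (by positivity)]
  calc exp (-(t ^ 2) - 2 * x * t) * t ^ a
      ≤ exp (2 * x ^ 2) * exp (-(1 / 2) * t ^ 2) * t ^ a :=
        mul_le_mul_of_nonneg_right (exp_neg_sq_sub_mul_le x t) hpow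
    _ = exp (2 * x ^ 2) * (t ^ a * exp (-(1 / 2) * t ^ 2)) := by ring

theorem hasDerivAt_Fa_integrand_param (a t y : ℝ) (ht : 0 < t) :
    HasDerivAt (fun y => exp (-(t ^ 2) - 2 * y * t) * t ^ a)
      (-2 * (exp (-(t ^ 2) - 2 * y * t) * t ^ (a + 1))) y := by
  have hexp : HasDerivAt (fun y => exp (-(t ^ 2) - 2 * y * t))
      (exp (-(t ^ 2) - 2 * y * t) * (-(2 * t))) y := by
    refine HasDerivAt.exp ?_
    simpa using ((hasDerivAt_id y).const_mul 2).mul_const t |>.const_sub (-(t ^ 2))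
  refine (hexp.mul_const (t ^ a)).congr_deriv ?_
  rw [rpow_add_one ht.ne']
  ring

theorem hasDerivAt_Fa {a : ℝ} (ha : -1 < a) (x : ℝ) :
    HasDerivAt (Fa a) (-2 * Fa (a + 1) x) x := by
  have hdom : ∀ᵐ t ∂(volume.restrict (Ioi (0 : ℝ))), ∀ y ∈ Metric.ball x 1,
      ‖-2 * (exp (-(t ^ 2) - 2 * y * t) * t ^ (a + 1))‖
        ≤ 2 * (exp (-(t ^ 2) - 2 * (x - 1) * t) * t ^ (a + 1)) := by
    filter_upwards [self_mem_ae_restrict measurableSet_Ioi] with t (ht : 0 < t) y hy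
    have hxy : x - 1 ≤ y := by linarith [(abs_lt.1 (Real.dist_eq y x ▸ Metric.mem_ball.1 hy)).1]
    rw [norm_mul, norm_neg, Real.norm_ofNat, norm_mul, norm_of_nonneg (exp_pos _).le,
      norm_of_nonneg (rpow_nonneg ht.le _)]
    gcongr
  have hderiv := hasDerivAt_integral_of_dominated_loc_of_deriv_le (Metric.ball_mem_nhds x one_pos)
    (Eventually.of_forall fun y => (integrableOn_Fa_integrand ha y).aestronglyMeasurable)
    (integrableOn_Fa_integrand ha x)
    ((integrableOn_Fa_integrand (by linarith) x).const_mul (-2)).aestronglyMeasurable hdom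
    ((integrableOn_Fa_integrand (by linarith) (x - 1)).const_mul 2)
    (ae_restrict_of_forall_mem measurableSet_Ioi fun t ht y _ =>
      hasDerivAt_Fa_integrand_param a t y ht)
  have hFa := hderiv.2
  rw [integral_const_mul] at hFa
  exact hFa

theorem integral_Ioi_deriv_eq_zero_of_integrableOn {E : Type*} [NormedAddCommGroup E]
    [NormedSpace ℝ E] [CompleteSpace E] {f f' : ℝ → E} {c : ℝ}
    (hcont : ContinuousWithinAt f (Ici c) c) (hc : f c = 0)
    (hderiv : ∀ t ∈ Ioi c, HasDerivAt f (f' t) t)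
    (hf : IntegrableOn f (Ioi c)) (hf' : IntegrableOn f' (Ioi c)) :
    ∫ t in Ioi c, f' t = 0 := by
  rw [integral_Ioi_of_hasDerivAt_of_tendsto hcont hderiv hf'
    (tendsto_zero_of_hasDerivAt_of_integrableOn_Ioi hderiv hf' hf), hc, sub_zero]

theorem hasDerivAt_Fa_integrand_succ (a x t : ℝ) (ht : 0 < t) :
    HasDerivAt (fun t => exp (-(t ^ 2) - 2 * x * t) * t ^ (a + 1))
      ((a + 1) * (exp (-(t ^ 2) - 2 * x * t) * t ^ a)
        - 2 * (exp (-(t ^ 2) - 2 * x * t) * t ^ (a + 2))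
        - 2 * x * (exp (-(t ^ 2) - 2 * x * t) * t ^ (a + 1))) t := by
  have hexp : HasDerivAt (fun t => exp (-(t ^ 2) - 2 * x * t))
      (exp (-(t ^ 2) - 2 * x * t) * (-(2 * t) - 2 * x)) t := by
    refine HasDerivAt.exp ?_
    simpa using (hasDerivAt_pow 2 t).fun_neg.fun_sub ((hasDerivAt_id t).const_mul (2 * x))
  refine (hexp.mul (hasDerivAt_rpow_const (p := a + 1) (Or.inl ht.ne'))).congr_deriv ?_
  rw [show a + 2 = a + 1 + 1 by ring, rpow_add_one ht.ne' (a + 1), rpow_add_one ht.ne' a,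
    add_sub_cancel_right]
  ring

theorem Fa_recurrence {a : ℝ} (ha : -1 < a) (x : ℝ) :
    2 * Fa (a + 2) x + 2 * x * Fa (a + 1) x = (a + 1) * Fa a x := by
  set G : ℝ → ℝ := fun t => exp (-(t ^ 2) - 2 * x * t) * t ^ (a + 1)
  have hGcont : ContinuousWithinAt G (Ici 0) 0 :=
    (Continuous.continuousAt (by fun_prop) |>.mul
      (continuousAt_rpow_const 0 (a + 1) (Or.inr (by linarith)))).continuousWithinAt
  have hG0 : G 0 = 0 := by simp [G, zero_rpow (by linarith : a + 1 ≠ 0)]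
  have I0 := (integrableOn_Fa_integrand ha x).const_mul (a + 1)
  have I1 := integrableOn_Fa_integrand (a := a + 1) (by linarith) x
  have I2 := (integrableOn_Fa_integrand (a := a + 2) (by linarith) x).const_mul 2
  have I1' := I1.const_mul (2 * x)
  have hFTC := integral_Ioi_deriv_eq_zero_of_integrableOn hGcont hG0
    (fun t ht => hasDerivAt_Fa_integrand_succ a x t ht) I1 ((I0.sub I2).sub I1')
  have hsplit := (integral_sub' (I0.sub I2) I1').symm.trans hFTC
  rw [integral_sub' I0 I2] at hsplit
  simp only [integral_const_mul] at hsplit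
  simp only [Fa]
  linarith

/-- The recurrence `2·F_{a+2}(x) + 2x·F_{a+1}(x) = (a+1)·F_a(x)`, and consequently the
Hermite differential equation `F_a''(x) - 2x·F_a'(x) - 2(a+1)·F_a(x) = 0`. -/
theorem Fa_recurrence_and_ODE (a : ℝ) (ha : -1 < a) (x : ℝ) :
    2 * Fa (a + 2) x + 2 * x * Fa (a + 1) x = (a + 1) * Fa a x ∧
    deriv (deriv (Fa a)) x - 2 * x * deriv (Fa a) x - 2 * (a + 1) * Fa a x = 0 := by
  have hderiv : deriv (Fa a) = fun y => -2 * Fa (a + 1) y :=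
    funext fun y => (hasDerivAt_Fa ha y).deriv
  have hderiv2 : deriv (deriv (Fa a)) x = -2 * (-2 * Fa (a + 2) x) := by
    rw [hderiv, show a + 2 = a + 1 + 1 by ring]
    exact ((hasDerivAt_Fa (by linarith) x).const_mul (-2)).deriv
  refine ⟨Fa_recurrence ha x, ?_⟩
  rw [hderiv2, hderiv]
  linarith [Fa_recurrence ha x]
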